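/- Exact representation of the return-time tail. For every i ∈ {1,…,N} and every integer k ≥ 1: P̃(τ^i > k) = Ẽ[ (1 − p_N)^{| ∪_{n=1}^{k−1} 𝒱̃^n_{i→·} |} ], where Ẽ denotes expectation under P̃ and |·| denotes cardinality; moreover, on the event {τ^i > k} one has ∪_{n≤k−1} 𝒱^n_{i→·} = ∪_{n≤k−1} 𝒱̃^n_{i→·}. -/

import Mathlib

open MeasureTheory ProbabilityTheory
open scoped ENNReal

/-!
Before the first return to `i`, the exploration from `i` coincides with the one avoiding `i`, so
`τ^i > k` holds iff no vertex of `U = ⋃_{1 ≤ n ≤ k-1} 𝒱̃^n_{i→·}` has an edge into `i` (level `0`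
is `{i}` itself, and there are no loops). The set `U` is a function of the edges not entering `i`,
which are independent of the column `(W_{j→i})_j`. Freezing `U`, the `|U|` edges from `U` into `i`
are absent with probability `(1 - p_N)^{|U|}`.
-/

/-- The sets `𝒱^n_{i→·}` of neurons reachable from `i` in `n` steps along the directed
graph `W`: `reach W i 1 = {j : W_{i→j} = 1}` and
`reach W i (n+1) = {j : ∃ k ∈ reach W i n, W_{k→j} = 1}` (with `reach W i 0 = {i}`). -/
def reach {N : ℕ} (W : Fin N → Fin N → Bool) (i : Fin N) : ℕ → Finset (Fin N)
  | 0 => {i}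
  | n + 1 => Finset.univ.filter (fun j => ∃ k ∈ reach W i n, W k j = true)

/-- The sets `𝒱̃^n_{i→·}`: the same exploration as `reach`, but always excluding `i`. -/
def reachAvoid {N : ℕ} (W : Fin N → Fin N → Bool) (i : Fin N) : ℕ → Finset (Fin N)
  | 0 => {i}
  | n + 1 => Finset.univ.filter (fun j => j ≠ i ∧ ∃ k ∈ reachAvoid W i n, W k j = true)

section Exploration

variable {N : ℕ} {W W' : Fin N → Fin N → Bool} {i j : Fin N} {n k : ℕ}

@[simp] lemma mem_reach_succ : j ∈ reach W i (n + 1) ↔ ∃ l ∈ reach W i n, W l j = true := by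
  simp [reach]

@[simp] lemma mem_reachAvoid_succ :
    j ∈ reachAvoid W i (n + 1) ↔ j ≠ i ∧ ∃ l ∈ reachAvoid W i n, W l j = true := by
  simp [reachAvoid]

lemma ne_of_mem_reachAvoid (hn : 1 ≤ n) (h : j ∈ reachAvoid W i n) : j ≠ i := by
  obtain ⟨m, rfl⟩ := Nat.exists_eq_add_of_le' hn
  exact (mem_reachAvoid_succ.1 h).1

lemma self_notMem_biUnion_reachAvoid (m : ℕ) :
    i ∉ (Finset.Icc 1 m).biUnion (reachAvoid W i) := by
  simp only [Finset.mem_biUnion, Finset.mem_Icc, not_exists, not_and]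
  exact fun n hn hi => ne_of_mem_reachAvoid hn.1 hi rfl

lemma reach_eq_reachAvoid (h : ∀ m, 1 ≤ m → m ≤ n → i ∉ reach W i m) :
    reach W i n = reachAvoid W i n := by
  induction n with
  | zero => rfl
  | succ n ih =>
    ext j
    rw [mem_reach_succ, mem_reachAvoid_succ, ← ih fun m h1 h2 => h m h1 (by omega)]
    refine ⟨fun hj => ⟨?_, hj⟩, And.right⟩
    rintro rfl
    exact h (n + 1) le_add_self le_rfl (mem_reach_succ.2 hj)

lemma reachAvoid_congr (h : ∀ a b, b ≠ i → W a b = W' a b) (n : ℕ) :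
    reachAvoid W i n = reachAvoid W' i n := by
  induction n with
  | zero => rfl
  | succ n ih =>
    ext j
    simp only [mem_reachAvoid_succ, ih]
    exact and_congr_right fun hj => exists_congr fun a => and_congr_right fun _ => by rw [h a j hj]

lemma forall_notMem_reach_iff :
    (∀ n, 1 ≤ n → n ≤ k → i ∉ reach W i n) ↔ ∀ m < k, ∀ j ∈ reachAvoid W i m, W j i = false := by
  induction k with
  | zero => exact ⟨fun _ m hm => absurd hm m.not_lt_zero, fun _ n h1 h2 => by omega⟩
  | succ k ih =>
    have hsplit : (∀ n, 1 ≤ n → n ≤ k + 1 → i ∉ reach W i n) ↔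
        (∀ n, 1 ≤ n → n ≤ k → i ∉ reach W i n) ∧ i ∉ reach W i (k + 1) :=
      ⟨fun h => ⟨fun n h1 h2 => h n h1 (by omega), h _ (by omega) le_rfl⟩,
        fun h n h1 h2 => (Nat.le_succ_iff.1 h2).elim (h.1 n h1) fun e => e ▸ h.2⟩
    rw [hsplit, Nat.forall_lt_succ_right, ← ih]
    refine and_congr_right fun hk => ?_
    rw [← reach_eq_reachAvoid hk]
    simp

lemma forall_notMem_reach_iff_biUnion (hii : W i i = false) (hk : 1 ≤ k) :
    (∀ n, 1 ≤ n → n ≤ k → i ∉ reach W i n) ↔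
      ∀ j ∈ (Finset.Icc 1 (k - 1)).biUnion (reachAvoid W i), W j i = false := by
  rw [forall_notMem_reach_iff]
  simp only [Finset.mem_biUnion, Finset.mem_Icc]
  constructor
  · rintro h j ⟨m, hm, hj⟩
    exact h m (by omega) j hj
  · intro h m hm j hj
    rcases Nat.eq_zero_or_pos m with rfl | hm0
    · rwa [show j = i by simpa [reachAvoid] using hj]
    · exact h j ⟨m, by omega, hj⟩

end Exploration

section Freezing

variable {Ω α β : Type*} [MeasurableSpace Ω] {μ : Measure Ω} [IsFiniteMeasure μ]
  [Fintype α] [MeasurableSpace α] [MeasurableSingletonClass α] [MeasurableSpace β]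
  {Y : Ω → α} {Z : Ω → β}

lemma ProbabilityTheory.IndepFun.measureReal_setOf_mem_eq_integral (hYZ : IndepFun Y Z μ)
    (hY : Measurable Y) (hZ : Measurable Z) {E : α → Set β} (hE : ∀ a, MeasurableSet (E a)) :
    μ.real {ω | Z ω ∈ E (Y ω)} = ∫ ω, μ.real (Z ⁻¹' E (Y ω)) ∂μ := by
  have decomp : {ω | Z ω ∈ E (Y ω)} = ⋃ a ∈ Finset.univ, Y ⁻¹' {a} ∩ Z ⁻¹' E a := by
    ext ω; simp
  rw [decomp, measureReal_biUnion_finset, ← integral_map (f := fun a => μ.real (Z ⁻¹' E a))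
    hY.aemeasurable (Measurable.of_discrete.aestronglyMeasurable), integral_fintype]
  · refine Finset.sum_congr rfl fun a _ => ?_
    rw [measureReal_def, hYZ.measure_inter_preimage_eq_mul _ _ (measurableSet_singleton a) (hE a),
      ENNReal.toReal_mul, map_measureReal_apply hY (measurableSet_singleton a), smul_eq_mul,
      measureReal_def, measureReal_def]
  · exact Integrable.of_finite
  · intro a _ b _ hab
    exact Disjoint.mono Set.inter_subset_left Set.inter_subset_left
      ((Set.disjoint_singleton.2 hab).preimage Y)
  · exact fun a _ => (hY (measurableSet_singleton a)).inter (hZ (hE a))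

end Freezing

def eraseCol {N : ℕ} (i : Fin N) (V : Fin N → Fin N → Bool) : Fin N → Fin N → Bool :=
  fun a b => if b = i then false else V a b

section RandomGraph

variable {Ω : Type*} [MeasurableSpace Ω] {μ : Measure Ω} {N : ℕ} {W : Ω → Fin N → Fin N → Bool}

lemma indepFun_eraseCol_column (hmeas : ∀ q : Fin N × Fin N, Measurable fun ω => W ω q.1 q.2)
    (hdiag : ∀ ω j, W ω j j = false)
    (hindep : iIndepFun (fun (q : {q : Fin N × Fin N // q.1 ≠ q.2}) ω => W ω q.1.1 q.1.2) μ)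
    (i : Fin N) :
    IndepFun (fun ω => eraseCol i (W ω)) (fun ω j => W ω j i) μ := by
  classical
  let S := Finset.univ.filter fun q : {q : Fin N × Fin N // q.1 ≠ q.2} => q.1.2 ≠ i
  let T := Finset.univ.filter fun q : {q : Fin N × Fin N // q.1 ≠ q.2} => q.1.2 = i
  have hST : Disjoint S T := Finset.disjoint_filter.2 fun _ _ h => h
  let φ : (S → Bool) → Fin N → Fin N → Bool := fun x a b =>
    if h : a ≠ b ∧ b ≠ i then x ⟨⟨(a, b), h.1⟩, by simp [S, h.2]⟩ else false
  let ψ : (T → Bool) → Fin N → Bool := fun y j =>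
    if h : j ≠ i then y ⟨⟨(j, i), h⟩, by simp [T]⟩ else false
  -- `φ` and `ψ` rebuild the two matrices from disjoint blocks of the independent family;
  -- the diagonal entries they miss are `false` by `hdiag`.
  have key := (hindep.indepFun_finset S T hST fun q => hmeas q.1).comp
    (Measurable.of_discrete (f := φ)) (Measurable.of_discrete (f := ψ))
  convert key using 1
  · funext ω a b
    by_cases hb : b = i
    · simp [eraseCol, φ, hb]
    · by_cases hab : a = b
      · subst hab; simp [eraseCol, φ, hdiag]
      · simp [eraseCol, φ, hb, hab]
  · funext ω j
    by_cases hj : j = i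
    · subst hj; simp [ψ, hdiag]
    · simp [ψ, hj]

lemma measureReal_forall_edge_eq_false [IsProbabilityMeasure μ] {p : ℝ} (hp : 0 ≤ p)
    (hmeas : ∀ q : Fin N × Fin N, Measurable fun ω => W ω q.1 q.2)
    (hber : ∀ a b : Fin N, a ≠ b → μ {ω | W ω a b = true} = ENNReal.ofReal p)
    (hindep : iIndepFun (fun (q : {q : Fin N × Fin N // q.1 ≠ q.2}) ω => W ω q.1.1 q.1.2) μ)
    {i : Fin N} {s : Finset (Fin N)} (hs : i ∉ s) :
    μ.real {ω | ∀ j ∈ s, W ω j i = false} = (1 - p) ^ s.card := by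
  classical
  let e : {j // j ≠ i} → {q : Fin N × Fin N // q.1 ≠ q.2} := fun j => ⟨(j, i), j.2⟩
  have he : e.Injective := fun a b h => Subtype.ext (congrArg (fun q => q.1.1) h)
  have hcol : iIndepFun (fun (j : {j // j ≠ i}) ω => W ω j i) μ := hindep.precomp he
  have hnonedge : ∀ j : {j // j ≠ i}, μ.real ((fun ω => W ω j i) ⁻¹' {false}) = 1 - p := by
    intro j
    have hcompl : (fun ω => W ω j i) ⁻¹' {false} = {ω | W ω j i = true}ᶜ := by ext; simp
    have hedge : MeasurableSet {ω | W ω j i = true} := hmeas (j, i) (measurableSet_singleton true)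
    rw [hcompl, probReal_compl_eq_one_sub hedge,
      measureReal_def, hber j i j.2, ENNReal.toReal_ofReal hp]
  have hinter : {ω | ∀ j ∈ s, W ω j i = false}
      = ⋂ j ∈ s.subtype (· ≠ i), (fun ω => W ω j i) ⁻¹' {false} := by
    ext ω
    simp only [Set.mem_ofPred_eq, Set.mem_iInter, Finset.mem_subtype, Set.mem_preimage,
      Set.mem_singleton_iff, Subtype.forall]
    exact ⟨fun h j _ hj => h j hj, fun h j hj => h j (ne_of_mem_of_not_mem hj hs) hj⟩
  rw [hinter, measureReal_def, hcol.measure_inter_preimage_eq_mul _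
      fun _ _ => measurableSet_singleton _, ENNReal.toReal_prod]
  simp only [← measureReal_def, hnonedge, Finset.prod_const, Finset.card_subtype,
    Finset.filter_true_of_mem fun j hj => ne_of_mem_of_not_mem hj hs]

end RandomGraph

theorem return_time_tail_representation_general
    {Ωt : Type*} [MeasurableSpace Ωt] (Pt : Measure Ωt) [IsProbabilityMeasure Pt]
    (N : ℕ) (ϑ : ℝ) (hϑ : 0 < ϑ)
    (W : Ωt → Fin N → Fin N → Bool)
    (hmeas : ∀ p : Fin N × Fin N, Measurable (fun ω => W ω p.1 p.2))
    (hdiag : ∀ ω j, W ω j j = false)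
    (hber : ∀ i j : Fin N, i ≠ j →
      Pt {ω | W ω i j = true} = ENNReal.ofReal ((1 + ϑ / N) / N))
    (hindep : iIndepFun
      (fun (p : {p : Fin N × Fin N // p.1 ≠ p.2}) ω => W ω p.1.1 p.1.2) Pt)
    (i : Fin N) (k : ℕ) (hk : 1 ≤ k) :
    (Pt {ω | ∀ n : ℕ, 1 ≤ n → n ≤ k → i ∉ reach (W ω) i n}).toReal
      = ∫ ω, (1 - (1 + ϑ / N) / N) ^
          (((Finset.Icc 1 (k-1)).biUnion (fun n => reachAvoid (W ω) i n)).card) ∂Pt ∧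
    ∀ ω, (∀ n : ℕ, 1 ≤ n → n ≤ k → i ∉ reach (W ω) i n) →
      (Finset.Icc 1 (k-1)).biUnion (fun n => reach (W ω) i n)
        = (Finset.Icc 1 (k-1)).biUnion (fun n => reachAvoid (W ω) i n) := by
  refine ⟨?_, fun ω hω => Finset.biUnion_congr rfl fun n hn =>
    reach_eq_reachAvoid fun m h1 h2 => hω m h1 (by grind)⟩
  let U : (Fin N → Fin N → Bool) → Finset (Fin N) :=
    fun V => (Finset.Icc 1 (k - 1)).biUnion (reachAvoid V i)
  have hU : ∀ ω, U (eraseCol i (W ω)) = U (W ω) := fun ω =>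
    Finset.biUnion_congr rfl fun n _ => reachAvoid_congr (fun a b hb => by simp [eraseCol, hb]) n
  let E : (Fin N → Fin N → Bool) → Set (Fin N → Bool) := fun c => {z | ∀ j ∈ U c, z j = false}
  have hevent : {ω | ∀ n : ℕ, 1 ≤ n → n ≤ k → i ∉ reach (W ω) i n}
      = {ω | (fun j => W ω j i) ∈ E (eraseCol i (W ω))} := by
    ext ω
    simp only [Set.mem_ofPred_eq, E, hU, forall_notMem_reach_iff_biUnion (hdiag ω i) hk, U]
  have hW : Measurable W :=
    measurable_pi_lambda _ fun a => measurable_pi_lambda _ fun b => hmeas (a, b)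
  rw [← measureReal_def, hevent,
    (indepFun_eraseCol_column hmeas hdiag hindep i).measureReal_setOf_mem_eq_integral (E := E)
      ((Measurable.of_discrete (f := eraseCol i)).comp hW)
      (measurable_pi_lambda _ fun j => hmeas (j, i)) fun _ => (Set.toFinite _).measurableSet]
  refine integral_congr_ae (ae_of_all _ fun ω => ?_)
  show Pt.real {ω' | ∀ j ∈ U (eraseCol i (W ω)), W ω' j i = false}
    = (1 - (1 + ϑ / N) / N) ^ (U (W ω)).card
  rw [← hU ω]
  exact measureReal_forall_edge_eq_false (by positivity) hmeas hber hindep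
    (self_notMem_biUnion_reachAvoid _)

/-- **Exact representation of the return-time tail.** For i.i.d. Bernoulli(`p_N`) weights,
`P̃(τ^i > k) = Ẽ[(1 - p_N)^{|∪_{n=1}^{k-1} 𝒱̃^n_{i→·}|}]`, and on `{τ^i > k}` one has
`∪_{n≤k-1} 𝒱^n_{i→·} = ∪_{n≤k-1} 𝒱̃^n_{i→·}`. -/
theorem return_time_tail_representation
    {Ωt : Type*} [MeasurableSpace Ωt] (Pt : Measure Ωt) [IsProbabilityMeasure Pt]
    (N : ℕ) (hN : 0 < N) (ϑ : ℝ) (hϑ : 0 < ϑ)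
    (W : Ωt → Fin N → Fin N → Bool)
    (hmeas : ∀ p : Fin N × Fin N, Measurable (fun ω => W ω p.1 p.2))
    (hdiag : ∀ ω j, W ω j j = false)
    (hber : ∀ i j : Fin N, i ≠ j →
      Pt {ω | W ω i j = true} = ENNReal.ofReal ((1 + ϑ / N) / N))
    (hindep : iIndepFun
      (fun (p : {p : Fin N × Fin N // p.1 ≠ p.2}) ω => W ω p.1.1 p.1.2) Pt)
    (i : Fin N) (k : ℕ) (hk : 1 ≤ k) :
    (Pt {ω | ∀ n : ℕ, 1 ≤ n → n ≤ k → i ∉ reach (W ω) i n}).toReal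
      = ∫ ω, (1 - (1 + ϑ / N) / N) ^
          (((Finset.Icc 1 (k-1)).biUnion (fun n => reachAvoid (W ω) i n)).card) ∂Pt ∧
    ∀ ω, (∀ n : ℕ, 1 ≤ n → n ≤ k → i ∉ reach (W ω) i n) →
      (Finset.Icc 1 (k-1)).biUnion (fun n => reach (W ω) i n)
        = (Finset.Icc 1 (k-1)).biUnion (fun n => reachAvoid (W ω) i n) :=
  return_time_tail_representation_general Pt N ϑ hϑ W hmeas hdiag hber hindep i k hk
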